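/- Gaussian integral identity: for all reals a, b, h, k with h \le k, \int_h^k \phi(x)\Phi(a + b x) dx = \int_{-\infty}^{a/\sqrt{b^2+1}} \phi(x)\Phi(k\sqrt{b^2+1} + b x) dx - \int_{-\infty}^{a/\sqrt{b^2+1}} \phi(x)\Phi(h\sqrt{b^2+1} + b x) dx. -/

import Mathlib

open MeasureTheory

/-- Standard normal p.d.f. -/
noncomputable def stdPdf (x : ℝ) : ℝ :=
  (Real.sqrt (2 * Real.pi))⁻¹ * Real.exp (-x ^ 2 / 2)

/-- Standard normal c.d.f. -/
noncomputable def stdCdf (x : ℝ) : ℝ := ∫ t in Set.Iic x, stdPdf t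

/-!
Write `s = √(b² + 1)` and `c = a / s`. Since `Φ(ks + bx) - Φ(hs + bx) = s ∫_h^k φ(su + bx) du`,
the right-hand side is the double integral of `s φ(x) φ(su + bx)` over `x ≤ c`, `u ∈ [h, k]`.
Because `s² = b² + 1`, the quadratic form `x² + (su + bx)²` is symmetric in `x` and `u`, so
`φ(x) φ(su + bx) = φ(u) φ(sx + bu)`; after exchanging the integrals, the inner integral over
`x ≤ c` is therefore `φ(u) Φ(sc + bu) / s = φ(u) Φ(a + bu) / s`.
-/

open Set Real
open scoped Interval

theorem integral_Iic_comp_mul_add {E : Type*} [NormedAddCommGroup E] [NormedSpace ℝ E]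
    (g : ℝ → E) {s : ℝ} (hs : 0 < s) (d c : ℝ) :
    ∫ x in Iic c, g (s * x + d) = s⁻¹ • ∫ t in Iic (s * c + d), g t := by
  have hpre : (fun x => s * x + d) ⁻¹' Iic (s * c + d) = Iic c := by
    ext x
    simp only [mem_preimage, mem_Iic, add_le_add_iff_right, mul_le_mul_iff_right₀ hs]
  have hscale := Measure.integral_comp_mul_left (fun y => (Iic (s * c + d)).indicator g (y + d)) s
  rw [integral_add_right_eq_self, abs_of_pos (inv_pos.2 hs)] at hscale
  rw [← integral_indicator measurableSet_Iic, ← integral_indicator measurableSet_Iic, ← hscale]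
  congr 1 with x
  rw [← hpre]
  exact indicator_comp_right _

instance isFiniteMeasure_restrict_uIoc (a b : ℝ) : IsFiniteMeasure (volume.restrict (Ι a b)) :=
  isFiniteMeasure_restrict.2 (by simp)

theorem stdPdf_eq_gaussianPDFReal : stdPdf = ProbabilityTheory.gaussianPDFReal 0 1 := by
  ext x
  simp [stdPdf, ProbabilityTheory.gaussianPDFReal]

theorem stdPdf_nonneg (x : ℝ) : 0 ≤ stdPdf x := by
  unfold stdPdf; positivity

theorem stdPdf_le (x : ℝ) : stdPdf x ≤ (√(2 * π))⁻¹ := by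
  unfold stdPdf
  refine mul_le_of_le_one_right (by positivity) (exp_le_one_iff.2 ?_)
  nlinarith [sq_nonneg x]

theorem continuous_stdPdf : Continuous stdPdf := by
  unfold stdPdf; fun_prop

theorem integrable_stdPdf : Integrable stdPdf := by
  rw [stdPdf_eq_gaussianPDFReal]
  exact ProbabilityTheory.integrable_gaussianPDFReal 0 1

theorem integral_stdPdf : ∫ x, stdPdf x = 1 := by
  rw [stdPdf_eq_gaussianPDFReal]
  exact ProbabilityTheory.integral_gaussianPDFReal_eq_one 0 one_ne_zero

theorem stdCdf_nonneg (x : ℝ) : 0 ≤ stdCdf x :=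
  setIntegral_nonneg measurableSet_Iic fun t _ => stdPdf_nonneg t

theorem stdCdf_le_one (x : ℝ) : stdCdf x ≤ 1 :=
  integral_stdPdf ▸ setIntegral_le_integral integrable_stdPdf (.of_forall stdPdf_nonneg)

theorem monotone_stdCdf : Monotone stdCdf := fun _ _ hxy =>
  setIntegral_mono_set integrable_stdPdf.integrableOn (.of_forall stdPdf_nonneg)
    (Iic_subset_Iic.2 hxy).eventuallyLE

theorem stdCdf_sub_stdCdf (x y : ℝ) : stdCdf y - stdCdf x = ∫ t in x..y, stdPdf t :=
  intervalIntegral.integral_Iic_sub_Iic integrable_stdPdf.integrableOn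
    integrable_stdPdf.integrableOn

theorem integrable_stdPdf_mul_stdCdf_comp {g : ℝ → ℝ} (hg : Measurable g) :
    Integrable fun x => stdPdf x * stdCdf (g x) :=
  integrable_stdPdf.mul_bdd (monotone_stdCdf.measurable.comp hg).aestronglyMeasurable
    (.of_forall fun x => by
      rw [norm_of_nonneg (stdCdf_nonneg _)]
      exact stdCdf_le_one _)

theorem stdCdf_mul_add_sub_stdCdf_mul_add (s d h k : ℝ) :
    stdCdf (k * s + d) - stdCdf (h * s + d) = s * ∫ u in h..k, stdPdf (s * u + d) := by
  rw [stdCdf_sub_stdCdf, mul_comm h, mul_comm k, ← intervalIntegral.smul_integral_comp_mul_add,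
    smul_eq_mul]

theorem stdPdf_mul_stdPdf_comm {b s : ℝ} (hs : s ^ 2 = b ^ 2 + 1) (u x : ℝ) :
    stdPdf x * stdPdf (s * u + b * x) = stdPdf u * stdPdf (s * x + b * u) := by
  unfold stdPdf
  rw [mul_mul_mul_comm, ← exp_add, mul_mul_mul_comm, ← exp_add]
  congr 2
  linear_combination ((x ^ 2 - u ^ 2) / 2) * hs

theorem integral_Iic_stdPdf_mul_stdPdf {b s : ℝ} (hs0 : 0 < s) (hs : s ^ 2 = b ^ 2 + 1)
    (c u : ℝ) :
    ∫ x in Iic c, s * stdPdf x * stdPdf (s * u + b * x) = stdPdf u * stdCdf (s * c + b * u) := by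
  simp_rw [mul_assoc, stdPdf_mul_stdPdf_comm hs u, integral_const_mul,
    integral_Iic_comp_mul_add stdPdf hs0, smul_eq_mul, stdCdf]
  field_simp

theorem integrable_mul_stdPdf_mul_stdPdf (μ : Measure ℝ) [IsFiniteMeasure μ] (S : Set ℝ)
    (s b : ℝ) :
    Integrable (fun p : ℝ × ℝ => s * stdPdf p.2 * stdPdf (s * p.1 + b * p.2))
      (μ.prod (volume.restrict S)) :=
  ((integrable_stdPdf.restrict.const_mul s).comp_snd μ).mul_bdd
    (continuous_stdPdf.comp (by fun_prop)).aestronglyMeasurable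
    (.of_forall fun p => by
      rw [norm_of_nonneg (stdPdf_nonneg _)]
      exact stdPdf_le _)

theorem owen_10010_4_general (a b h k : ℝ) :
    (∫ x in h..k, stdPdf x * stdCdf (a + b * x)) =
      (∫ x in Set.Iic (a / Real.sqrt (b ^ 2 + 1)),
          stdPdf x * stdCdf (k * Real.sqrt (b ^ 2 + 1) + b * x)) -
        ∫ x in Set.Iic (a / Real.sqrt (b ^ 2 + 1)),
          stdPdf x * stdCdf (h * Real.sqrt (b ^ 2 + 1) + b * x) := by
  set s := √(b ^ 2 + 1)
  have hs0 : 0 < s := sqrt_pos.2 (by positivity)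
  have hs : s ^ 2 = b ^ 2 + 1 := sq_sqrt (by positivity)
  have hsc : s * (a / s) = a := mul_div_cancel₀ a hs0.ne'
  calc (∫ u in h..k, stdPdf u * stdCdf (a + b * u))
      = ∫ u in h..k, ∫ x in Iic (a / s), s * stdPdf x * stdPdf (s * u + b * x) := by
        simp_rw [integral_Iic_stdPdf_mul_stdPdf hs0 hs, hsc]
    _ = ∫ x in Iic (a / s), ∫ u in h..k, s * stdPdf x * stdPdf (s * u + b * x) :=
        intervalIntegral_integral_swap (integrable_mul_stdPdf_mul_stdPdf _ _ s b)
    _ = ∫ x in Iic (a / s),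
          stdPdf x * stdCdf (k * s + b * x) - stdPdf x * stdCdf (h * s + b * x) := by
        simp_rw [← mul_sub, stdCdf_mul_add_sub_stdCdf_mul_add, mul_assoc,
          intervalIntegral.integral_const_mul, mul_left_comm s]
    _ = _ := integral_sub (integrable_stdPdf_mul_stdCdf_comp (by fun_prop)).integrableOn
        (integrable_stdPdf_mul_stdCdf_comp (by fun_prop)).integrableOn

/-- Owen's identity 10,010.4:
∫_h^k φ(x)Φ(a+bx) dx = ∫_{-∞}^{a/√(b²+1)} φ(x)Φ(k√(b²+1)+bx) dx
  - ∫_{-∞}^{a/√(b²+1)} φ(x)Φ(h√(b²+1)+bx) dx. -/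
theorem owen_10010_4 (a b h k : ℝ) (hhk : h ≤ k) :
    (∫ x in h..k, stdPdf x * stdCdf (a + b * x)) =
      (∫ x in Set.Iic (a / Real.sqrt (b ^ 2 + 1)),
          stdPdf x * stdCdf (k * Real.sqrt (b ^ 2 + 1) + b * x)) -
        ∫ x in Set.Iic (a / Real.sqrt (b ^ 2 + 1)),
          stdPdf x * stdCdf (h * Real.sqrt (b ^ 2 + 1) + b * x) :=
  owen_10010_4_general a b h k
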